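/- Let (V, c, H) be a weight-w Hodge decomposition datum with w even, and let S : V × V → ℂ be a polarization, i.e. a ℂ-bilinear form with S(v,u) = (−1)^w·S(u,v), S(c(u), c(v)) = conj(S(u,v)), S(H(p,q), H(p',q')) = 0 unless (p',q') = (q,p), and i^{p−q}·S(u, c(u)) real and strictly positive for every nonzero u ∈ H(p,q). Let V_ℝ := {v ∈ V : c(v) = v}, a real-linear subspace. Then the form s(u,v) := (−1)^{w/2}·S(u,v) takes real values on V_ℝ × V_ℝ, is symmetric there, and there is a direct sum decomposition V_ℝ = P ⊕ N of real subspaces with s(P, N) = 0, s positive definite on P, s negative definite on N, and dim_ℝ P − dim_ℝ N = Σ_{p,q} (−1)^p · dim_ℂ H(p,q). In other words, the signature of the symmetric bilinear form (−1)^{w/2}·S on the real form of V equals χ₁(V). -/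
import Mathlib
open Module

section CompAux

variable {V : Type*} [AddCommGroup V] [Module ℂ V]
variable (H : ℤ → ℤ → Submodule ℂ V)
variable (h_internal : DirectSum.IsInternal (fun pq : ℤ × ℤ => H pq.1 pq.2))

/-- The component projection of the Hodge decomposition, as a `ℂ`-linear endomorphism. -/
noncomputable def hodgeComp (pq : ℤ × ℤ) : V →ₗ[ℂ] V :=
  (H pq.1 pq.2).subtype ∘ₗ (DirectSum.component ℂ (ℤ × ℤ) (fun pq : ℤ × ℤ => H pq.1 pq.2) pq) ∘ₗ
    ((LinearEquiv.ofBijective (DirectSum.coeLinearMap fun pq : ℤ × ℤ => H pq.1 pq.2)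
      h_internal).symm : V →ₗ[ℂ] _)

lemma hodgeComp_mem (pq : ℤ × ℤ) (v : V) : hodgeComp H h_internal pq v ∈ H pq.1 pq.2 :=
  (((LinearEquiv.ofBijective (DirectSum.coeLinearMap fun pq : ℤ × ℤ => H pq.1 pq.2)
      h_internal).symm v) pq).2

lemma hodgeComp_eq_of_mem {pq : ℤ × ℤ} {x : V} (hx : x ∈ H pq.1 pq.2) :
    hodgeComp H h_internal pq x = x := by
  have := h_internal.ofBijective_coeLinearMap_of_mem (i := pq) hx
  simp only [hodgeComp, LinearMap.coe_comp, Function.comp_apply, LinearEquiv.coe_coe]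
  erw [this]
  rfl

lemma hodgeComp_eq_zero_of_ne {pq pq' : ℤ × ℤ} (h : pq ≠ pq') {x : V}
    (hx : x ∈ H pq.1 pq.2) : hodgeComp H h_internal pq' x = 0 := by
  have := h_internal.ofBijective_coeLinearMap_of_ne (i := pq) (j := pq') h ⟨x, hx⟩
  simp only [hodgeComp, LinearMap.coe_comp, Function.comp_apply, LinearEquiv.coe_coe]
  erw [this]
  rfl

lemma sum_hodgeComp (T : Finset (ℤ × ℤ)) (hT : ∀ pq : ℤ × ℤ, pq ∉ T → H pq.1 pq.2 = ⊥)
    (v : V) : ∑ pq ∈ T, hodgeComp H h_internal pq v = v := by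
  classical
  set e := LinearEquiv.ofBijective (DirectSum.coeLinearMap fun pq : ℤ × ℤ => H pq.1 pq.2)
    h_internal with he
  set x := e.symm v with hxdef
  have hcomp : ∀ pq : ℤ × ℤ, hodgeComp H h_internal pq v = ↑(x pq) := fun pq => rfl
  have hv : v = DirectSum.coeLinearMap (fun pq : ℤ × ℤ => H pq.1 pq.2) x := by
    have := e.apply_symm_apply v
    rw [← hxdef] at this
    exact this.symm
  have hsum : v = ∑ pq ∈ DFinsupp.support x, ((x pq : V)) := by
    conv_lhs => rw [hv, ← DirectSum.sum_support_of (x := x)]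
    rw [map_sum]
    exact Finset.sum_congr rfl fun pq _ => by rw [DirectSum.coeLinearMap_of]
  have hsupp : DFinsupp.support x ⊆ T := by
    intro pq hpq
    by_contra hnot
    have hb : (x pq : V) ∈ (⊥ : Submodule ℂ V) := by rw [← hT pq hnot]; exact (x pq).2
    rw [DFinsupp.mem_support_iff] at hpq
    exact hpq (Subtype.ext (by simpa using hb))
  rw [Finset.sum_congr rfl fun pq _ => hcomp pq]
  rw [hsum]
  symm
  apply Finset.sum_subset hsupp
  intro pq _ hpq
  rw [DFinsupp.notMem_support_iff] at hpq
  rw [hpq]; rfl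

lemma hodgeComp_unique (T : Finset (ℤ × ℤ)) (hT : ∀ pq : ℤ × ℤ, pq ∉ T → H pq.1 pq.2 = ⊥)
    (g : ℤ × ℤ → V) (hg : ∀ pq, g pq ∈ H pq.1 pq.2) {v : V} (hv : v = ∑ pq ∈ T, g pq)
    (pq : ℤ × ℤ) : hodgeComp H h_internal pq v = g pq := by
  classical
  rw [hv, map_sum]
  by_cases hmem : pq ∈ T
  · rw [Finset.sum_eq_single_of_mem pq hmem
      (fun b _ hne => hodgeComp_eq_zero_of_ne H h_internal hne (hg b))]
    exact hodgeComp_eq_of_mem H h_internal (hg pq)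
  · have hg0 : g pq = 0 := by
      have := hg pq; rw [hT pq hmem] at this; simpa using this
    rw [hg0]
    exact Finset.sum_eq_zero fun b hb =>
      hodgeComp_eq_zero_of_ne H h_internal (fun h : b = pq => hmem (h ▸ hb)) (hg b)

end CompAux

lemma sign_key {w p q : ℤ} (hw : Even w) (hpq : p + q = w) :
    (-1 : ℂ) ^ (w / 2) = (-1 : ℂ) ^ q * Complex.I ^ (p - q) := by
  obtain ⟨m, hm⟩ := hw
  have hdiv : w / 2 = m := by omega
  have hk : ∃ k : ℤ, p - q = 2 * k := by
    refine ⟨(p - q) / 2, by omega⟩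
  obtain ⟨k, hkk⟩ := hk
  have hI : Complex.I ^ (p - q) = (-1 : ℂ) ^ k := by
    rw [hkk, zpow_mul, show Complex.I ^ (2 : ℤ) = -1 by
      rw [show (2 : ℤ) = ((2 : ℕ) : ℤ) from rfl, zpow_natCast, Complex.I_sq]]
  rw [hI, hdiv, ← zpow_add₀ (by norm_num : (-1 : ℂ) ≠ 0)]
  congr 1
  omega

lemma finrank_biSup_of_independent {K M : Type*} [Field K] [AddCommGroup M] [Module K M]
    [FiniteDimensional K M] {ι : Type*} {f : ι → Submodule K M} (hf : iSupIndep f)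
    (s : Finset ι) :
    finrank K ↥(⨆ i ∈ s, f i) = ∑ i ∈ s, finrank K ↥(f i) := by
  classical
  induction s using Finset.induction with
  | empty => simp
  | @insert a s ha ih =>
    rw [Finset.sum_insert ha, ← ih]
    have hins : (⨆ i ∈ insert a s, f i) = f a ⊔ ⨆ i ∈ s, f i := by
      simp only [Finset.mem_insert, iSup_or, iSup_sup_eq, iSup_iSup_eq_left]
    rw [hins]
    have hdis : Disjoint (f a) (⨆ i ∈ s, f i) := hf.disjoint_biSup (by exact_mod_cast ha)
    have h2 := Submodule.finrank_sup_add_finrank_inf_eq (f a) (⨆ i ∈ s, f i)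
    rw [disjoint_iff.mp hdis, finrank_bot] at h2
    omega

lemma finrank_fixed_inf_eq {V : Type*} [AddCommGroup V] [Module ℂ V] [FiniteDimensional ℂ V]
    [Module ℝ V] [IsScalarTower ℝ ℂ V]
    (c : V → V)
    (hc_add : ∀ u v : V, c (u + v) = c u + c v)
    (hc_smul : ∀ (a : ℂ) (v : V), c (a • v) = (starRingEnd ℂ) a • c v)
    (hc_invol : ∀ v : V, c (c v) = v)
    (Vℝ : Submodule ℝ V) (hVℝ : (Vℝ : Set V) = {v : V | c v = v})
    (W : Submodule ℂ V) (hW : ∀ v ∈ W, c v ∈ W) :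
    finrank ℝ ↥(Vℝ ⊓ W.restrictScalars ℝ) = finrank ℂ ↥W := by
  haveI : FiniteDimensional ℝ V := Module.Finite.trans ℂ V
  have hmemVℝ : ∀ x : V, x ∈ Vℝ ↔ c x = x := by
    intro x
    have h : x ∈ (Vℝ : Set V) ↔ c x = x := by rw [hVℝ]; rfl
    exact h
  set J : V →ₗ[ℝ] V :=
    { toFun := fun v => Complex.I • v
      map_add' := fun u v => smul_add _ _ _
      map_smul' := fun a v => by
        simp only [RingHom.id_apply]
        rw [← algebraMap_smul ℂ a v, ← algebraMap_smul ℂ a (Complex.I • v),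
          smul_smul, smul_smul, mul_comm] } with hJ
  have hJ_apply : ∀ v : V, J v = Complex.I • v := fun v => rfl
  set F := Vℝ ⊓ W.restrictScalars ℝ with hF
  set G := Submodule.map J F with hG
  have hJinj : Function.Injective J := by
    intro u v huv
    have : Complex.I • u = Complex.I • v := huv
    have := congrArg (fun x => (Complex.I)⁻¹ • x) this
    simpa [smul_smul] using this
  -- G ≃ F
  have hrankG : finrank ℝ ↥G = finrank ℝ ↥F :=
    (LinearEquiv.finrank_eq (Submodule.equivMapOfInjective J hJinj F)).symm
  -- F ⊓ G = ⊥
  have hinf : F ⊓ G = ⊥ := by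
    rw [eq_bot_iff]
    rintro v ⟨hvF, hvG⟩
    obtain ⟨u, huF, hu⟩ := hvG
    have hcv : c v = v := (hmemVℝ v).mp hvF.1
    have hcu : c u = u := (hmemVℝ u).mp huF.1
    have : c v = -v := by
      rw [← hu, hJ_apply, hc_smul, hcu]
      simp [Complex.conj_I, hJ_apply, ← hu]
    have hv0 : v = 0 := by
      have h2 : (2 : ℝ) • v = 0 := by
        rw [two_smul]
        nth_rewrite 1 [← hcv]
        rw [this]; abel
      have := smul_eq_zero.mp h2
      simpa using this
    simp [hv0]
  -- F ⊔ G = W as real submodules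
  have hsup : F ⊔ G = W.restrictScalars ℝ := by
    apply le_antisymm
    · apply sup_le
      · exact inf_le_right
      · rintro v ⟨u, huF, hu⟩
        have := huF.2
        rw [← hu, hJ_apply]
        exact Submodule.smul_mem W _ this
    · intro v hv
      have hcv : c v ∈ W := hW v hv
      set a := ((2 : ℂ))⁻¹ • (v + c v) with hadef
      set u := (-(((2 : ℂ))⁻¹ * Complex.I)) • (v - c v) with hudef
      have hc_sub : ∀ x y : V, c (x - y) = c x - c y := by
        intro x y
        have := hc_add (x - y) y
        rw [sub_add_cancel] at this
        rw [this]; abel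
      have ha_mem : a ∈ F := by
        refine Submodule.mem_inf.mpr ⟨?_, ?_⟩
        · rw [hmemVℝ]
          rw [hadef, hc_smul, hc_add, hc_invol]
          simp only [map_inv₀, Complex.conj_ofNat]
          congr 1
          abel
        · exact Submodule.smul_mem W _ (Submodule.add_mem W hv hcv)
      have hu_mem : u ∈ F := by
        refine Submodule.mem_inf.mpr ⟨?_, ?_⟩
        · rw [hmemVℝ]
          rw [hudef, hc_smul, hc_sub, hc_invol]
          rw [map_neg, map_mul, map_inv₀, Complex.conj_ofNat, Complex.conj_I]
          rw [show -((2 : ℂ)⁻¹ * -Complex.I) • (c v - v) = ((2 : ℂ)⁻¹ * Complex.I) • (c v - v) by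
            ring_nf]
          rw [show ((2 : ℂ)⁻¹ * Complex.I) • (c v - v) = (-((2 : ℂ)⁻¹ * Complex.I)) • (v - c v) by
            rw [neg_smul, ← smul_neg, neg_sub]]
        · exact Submodule.smul_mem W _ (Submodule.sub_mem W hv hcv)
      have hdecomp : v = a + J u := by
        rw [hadef, hudef, hJ_apply, smul_smul]
        rw [show Complex.I * -((2 : ℂ)⁻¹ * Complex.I) = (2 : ℂ)⁻¹ by
          rw [mul_neg, mul_comm, mul_assoc, Complex.I_mul_I]; ring]
        rw [← smul_add]
        rw [show v + c v + (v - c v) = (2 : ℂ) • v by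
          rw [two_smul]; abel]
        rw [smul_smul]
        norm_num
      rw [hdecomp]
      exact Submodule.add_mem _ (Submodule.mem_sup_left ha_mem)
        (Submodule.mem_sup_right (Submodule.mem_map_of_mem hu_mem))
  -- dimension count
  have hWdim : finrank ℝ ↥(W.restrictScalars ℝ) = 2 * finrank ℂ ↥W := by
    have h1 : finrank ℝ ℂ * finrank ℂ ↥W = finrank ℝ ↥(W.restrictScalars ℝ) :=
      Module.finrank_mul_finrank ℝ ℂ ↥W
    rw [← h1, Complex.finrank_real_complex]
  have hsum := Submodule.finrank_sup_add_finrank_inf_eq F G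
  rw [hinf, hsup, finrank_bot, hrankG, hWdim] at hsum
  omega



/-- **Even-weight case of the χ₁-genus lemma.**
For a pure polarized Hodge structure of even weight `w`, the signature of the induced
symmetric bilinear form `(−1)^{w/2} · S` on the real form `V_ℝ = {v | c v = v}` of `V`
equals `χ₁(V) = Σ_{p,q} (−1)^p · dim_ℂ H(p,q)`. -/
theorem signature_eq_chi_one_of_even_weight
    (V : Type*) [AddCommGroup V] [Module ℂ V] [FiniteDimensional ℂ V]
    [Module ℝ V] [IsScalarTower ℝ ℂ V]
    (c : V → V)
    (hc_add : ∀ u v : V, c (u + v) = c u + c v)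
    (hc_smul : ∀ (a : ℂ) (v : V), c (a • v) = (starRingEnd ℂ) a • c v)
    (hc_invol : ∀ v : V, c (c v) = v)
    (w : ℤ) (H : ℤ → ℤ → Submodule ℂ V)
    (h_internal : DirectSum.IsInternal (fun pq : ℤ × ℤ => H pq.1 pq.2))
    (h_weight : ∀ p q : ℤ, p + q ≠ w → H p q = ⊥)
    (h_conj : ∀ p q : ℤ, c '' (H p q : Set V) = (H q p : Set V))
    (hw_even : Even w)
    (S : V →ₗ[ℂ] V →ₗ[ℂ] ℂ)
    (hS_symm : ∀ u v : V, S v u = (-1 : ℂ) ^ w * S u v)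
    (hS_conj : ∀ u v : V, S (c u) (c v) = (starRingEnd ℂ) (S u v))
    (hS_orth : ∀ p q p' q' : ℤ, (p', q') ≠ (q, p) →
      ∀ u ∈ H p q, ∀ v ∈ H p' q', S u v = 0)
    (hS_pos : ∀ p q : ℤ, ∀ u ∈ H p q, u ≠ 0 →
      ∃ r : ℝ, 0 < r ∧ Complex.I ^ (p - q) * S u (c u) = (r : ℂ))
    (Vℝ : Submodule ℝ V) (hVℝ : (Vℝ : Set V) = {v : V | c v = v}) :
    -- the form s(u,v) := (−1)^{w/2} · S u v is real-valued and symmetric on V_ℝ,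
    (∀ u ∈ Vℝ, ∀ v ∈ Vℝ, ∃ r : ℝ, (-1 : ℂ) ^ (w / 2) * S u v = (r : ℂ)) ∧
    (∀ u ∈ Vℝ, ∀ v ∈ Vℝ, (-1 : ℂ) ^ (w / 2) * S u v = (-1 : ℂ) ^ (w / 2) * S v u) ∧
    -- and it has a decomposition V_ℝ = P ⊕ N into a positive and a negative definite
    -- part whose signature equals χ₁(V).
    ∃ P N : Submodule ℝ V, P ≤ Vℝ ∧ N ≤ Vℝ ∧ P ⊓ N = ⊥ ∧ P ⊔ N = Vℝ ∧
      (∀ u ∈ P, ∀ v ∈ N, (-1 : ℂ) ^ (w / 2) * S u v = 0) ∧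
      (∀ u ∈ P, u ≠ 0 → ∃ r : ℝ, 0 < r ∧ (-1 : ℂ) ^ (w / 2) * S u u = (r : ℂ)) ∧
      (∀ v ∈ N, v ≠ 0 → ∃ r : ℝ, r < 0 ∧ (-1 : ℂ) ^ (w / 2) * S v v = (r : ℂ)) ∧
      (Module.finrank ℝ P : ℤ) - (Module.finrank ℝ N : ℤ) =
        ∑ᶠ pq : ℤ × ℤ, ((pq.1.negOnePow : ℤ) * (Module.finrank ℂ (H pq.1 pq.2) : ℤ)) := by
  classical
  haveI : FiniteDimensional ℝ V := Module.Finite.trans ℂ V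
  haveI : IsNoetherian ℂ V := IsNoetherian.iff_fg.2 ‹_›
  have hmemVℝ : ∀ x : V, x ∈ Vℝ ↔ c x = x := by
    intro x
    have h : x ∈ (Vℝ : Set V) ↔ c x = x := by rw [hVℝ]; rfl
    exact h
  have hc_zero : c 0 = 0 := by
    have h := hc_add 0 0
    rw [add_zero] at h
    exact (add_eq_right.mp h.symm)
  have hc_sub : ∀ x y : V, c (x - y) = c x - c y := by
    intro x y
    have h := hc_add (x - y) y
    rw [sub_add_cancel] at h
    rw [h]; abel
  set comp : ℤ × ℤ → V →ₗ[ℂ] V := hodgeComp H h_internal with hcompdef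
  have hfin : {pq : ℤ × ℤ | H pq.1 pq.2 ≠ ⊥}.Finite :=
    Submodule.finite_ne_bot_of_iSupIndep h_internal.submodule_iSupIndep
  set T : Finset (ℤ × ℤ) := hfin.toFinset with hTdef
  have hTmem : ∀ pq : ℤ × ℤ, pq ∈ T ↔ H pq.1 pq.2 ≠ ⊥ := fun pq => hfin.mem_toFinset
  have hT : ∀ pq : ℤ × ℤ, pq ∉ T → H pq.1 pq.2 = ⊥ := fun pq hpq => by
    by_contra h; exact hpq ((hTmem pq).mpr h)
  have hconj_mem : ∀ (p q : ℤ) (x : V), x ∈ H p q → c x ∈ H q p := by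
    intro p q x hx
    have h : c x ∈ c '' (H p q : Set V) := ⟨x, hx, rfl⟩
    rw [h_conj p q] at h; exact h
  have hbotswap : ∀ p q : ℤ, H p q = ⊥ → H q p = ⊥ := by
    intro p q h
    rw [eq_bot_iff]
    intro x hx
    have hx' : x ∈ (H q p : Set V) := hx
    rw [← h_conj p q] at hx'
    obtain ⟨y, hy, rfl⟩ := hx'
    have : y = 0 := by rw [h] at hy; simpa using hy
    rw [this, hc_zero]; simp
  have hTswap : ∀ pq : ℤ × ℤ, pq ∈ T → (pq.2, pq.1) ∈ T := by
    intro pq h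
    rw [hTmem] at h ⊢
    exact fun hb => h (hbotswap pq.2 pq.1 hb)
  have hTw : ∀ pq : ℤ × ℤ, pq ∈ T → pq.1 + pq.2 = w := fun pq h => by
    by_contra hne; exact (hTmem pq).mp h (h_weight _ _ hne)
  have hsum : ∀ v : V, ∑ pq ∈ T, comp pq v = v := sum_hodgeComp H h_internal T hT
  have hmem : ∀ (pq : ℤ × ℤ) (v : V), comp pq v ∈ H pq.1 pq.2 := hodgeComp_mem H h_internal
  have hcomp_bot : ∀ (pq : ℤ × ℤ) (v : V), pq ∉ T → comp pq v = 0 := fun pq v h => by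
    have hm := hmem pq v; rw [hT pq h] at hm; simpa using hm
  set cadd : V →+ V := AddMonoidHom.mk' c hc_add with hcadddef
  have hcadd_apply : ∀ v : V, cadd v = c v := fun v => rfl
  have hcomp_conj : ∀ (v : V) (pq : ℤ × ℤ), comp pq (c v) = c (comp (pq.2, pq.1) v) := by
    intro v pq
    refine hodgeComp_unique H h_internal T hT (fun pq' => c (comp (pq'.2, pq'.1) v))
      (fun pq' => hconj_mem _ _ _ (hmem (pq'.2, pq'.1) v)) ?_ pq
    have h1 : c v = ∑ pq ∈ T, c (comp pq v) := by
      conv_lhs => rw [← hsum v]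
      rw [← hcadd_apply, map_sum]
      rfl
    rw [h1]
    refine Finset.sum_equiv (Equiv.prodComm ℤ ℤ) ?_ ?_
    · intro pq'
      constructor
      · exact fun h => hTswap pq' h
      · intro h
        have := hTswap _ h
        simpa using this
    · intro pq' _
      rfl
  -- the even and odd parts
  set Weven : Submodule ℂ V :=
    { carrier := {v : V | ∀ pq : ℤ × ℤ, ¬ Even pq.1 → comp pq v = 0}
      add_mem' := fun {a b} ha hb pq h => by
        rw [map_add, ha pq h, hb pq h, add_zero]
      zero_mem' := fun pq _ => map_zero _
      smul_mem' := fun a v hv pq h => by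
        rw [map_smul, hv pq h, smul_zero] } with hWevendef
  set Wodd : Submodule ℂ V :=
    { carrier := {v : V | ∀ pq : ℤ × ℤ, Even pq.1 → comp pq v = 0}
      add_mem' := fun {a b} ha hb pq h => by
        rw [map_add, ha pq h, hb pq h, add_zero]
      zero_mem' := fun pq _ => map_zero _
      smul_mem' := fun a v hv pq h => by
        rw [map_smul, hv pq h, smul_zero] } with hWodddef
  have hWeven_mem : ∀ v : V, v ∈ Weven ↔ (∀ pq : ℤ × ℤ, ¬ Even pq.1 → comp pq v = 0) :=
    fun v => Iff.rfl
  have hWodd_mem : ∀ v : V, v ∈ Wodd ↔ (∀ pq : ℤ × ℤ, Even pq.1 → comp pq v = 0) :=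
    fun v => Iff.rfl
  have hparT : ∀ pq : ℤ × ℤ, pq ∈ T → (Even pq.1 ↔ Even pq.2) := by
    intro pq h
    have hw' := hTw pq h
    have : Even (pq.1 + pq.2) := hw' ▸ hw_even
    rcases Int.even_add.mp this with h'
    exact h'
  have hWevenc : ∀ v ∈ Weven, c v ∈ Weven := by
    intro v hv
    rw [hWeven_mem] at hv ⊢
    intro pq hodd
    rw [hcomp_conj]
    by_cases hTm : (pq.2, pq.1) ∈ T
    · have hpar := hparT _ hTm
      have : ¬ Even pq.2 := fun he => hodd (hpar.mp he)
      rw [hv (pq.2, pq.1) this, hc_zero]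
    · rw [hcomp_bot _ _ hTm, hc_zero]
  have hWoddc : ∀ v ∈ Wodd, c v ∈ Wodd := by
    intro v hv
    rw [hWodd_mem] at hv ⊢
    intro pq heven
    rw [hcomp_conj]
    by_cases hTm : (pq.2, pq.1) ∈ T
    · have hpar := hparT _ hTm
      have : Even pq.2 := hpar.mpr heven
      rw [hv (pq.2, pq.1) this, hc_zero]
    · rw [hcomp_bot _ _ hTm, hc_zero]
  set P : Submodule ℝ V := Vℝ ⊓ Weven.restrictScalars ℝ with hPdef
  set N : Submodule ℝ V := Vℝ ⊓ Wodd.restrictScalars ℝ with hNdef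
  -- expansion of S
  have hS_expand : ∀ u v : V, S u v = ∑ pq ∈ T, S (comp pq u) (comp (pq.2, pq.1) v) := by
    intro u v
    conv_lhs => rw [← hsum u, ← hsum v]
    rw [map_sum S _ T, LinearMap.sum_apply]
    refine Finset.sum_congr rfl ?_
    intro pq hpq
    rw [map_sum]
    refine Finset.sum_eq_single_of_mem (pq.2, pq.1) (hTswap pq hpq) ?_
    intro b _ hne
    refine hS_orth pq.1 pq.2 b.1 b.2 ?_ _ (hmem pq u) _ (hmem b v)
    simpa using hne
  -- diagonal values
  have hdiag : ∀ (v : V), c v = v → ∀ pq : ℤ × ℤ, pq ∈ T → comp pq v ≠ 0 →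
      ∃ r : ℝ, 0 < r ∧
        (-1 : ℂ) ^ (w / 2) * S (comp pq v) (comp (pq.2, pq.1) v) = (-1 : ℂ) ^ pq.2 * r := by
    intro v hcv pq hpqT hne
    obtain ⟨r, hr, hre⟩ := hS_pos pq.1 pq.2 _ (hmem pq v) hne
    have hccomp : comp (pq.2, pq.1) v = c (comp pq v) := by
      conv_lhs => rw [← hcv]
      rw [hcomp_conj]
    refine ⟨r, hr, ?_⟩
    rw [hccomp, sign_key hw_even (hTw pq hpqT), mul_assoc, hre]
  -- positivity on the even part
  have hPos : ∀ u : V, c u = u → u ∈ Weven → u ≠ 0 →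
      ∃ r : ℝ, 0 < r ∧ (-1 : ℂ) ^ (w / 2) * S u u = (r : ℂ) := by
    intro u hcu huW hu0
    set t : ℤ × ℤ → ℝ :=
      fun pq => ((-1 : ℂ) ^ (w / 2) * S (comp pq u) (comp (pq.2, pq.1) u)).re with htdef
    have hterm : ∀ pq ∈ T,
        (-1 : ℂ) ^ (w / 2) * S (comp pq u) (comp (pq.2, pq.1) u) = (t pq : ℂ) ∧
        0 ≤ t pq ∧ (comp pq u ≠ 0 → 0 < t pq) := by
      intro pq hpq
      by_cases h0 : comp pq u = 0
      · refine ⟨?_, ?_, fun h => absurd h0 h⟩ <;> simp [htdef, h0]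
      · obtain ⟨r, hr, heq⟩ := hdiag u hcu pq hpq h0
        have heven : Even pq.1 := by
          by_contra h
          exact h0 ((hWeven_mem u).mp huW pq h)
        have hq_even : Even pq.2 := (hparT pq hpq).mp heven
        have heq' : (-1 : ℂ) ^ (w / 2) * S (comp pq u) (comp (pq.2, pq.1) u) = (r : ℂ) := by
          rw [heq, Even.neg_one_zpow hq_even, one_mul]
        have ht : t pq = r := by rw [htdef]; simp only [heq', Complex.ofReal_re]
        exact ⟨by rw [heq', ht], by rw [ht]; exact hr.le, fun _ => by rw [ht]; exact hr⟩
    have hsum_eq : (-1 : ℂ) ^ (w / 2) * S u u = ((∑ pq ∈ T, t pq : ℝ) : ℂ) := by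
      rw [hS_expand u u, Finset.mul_sum]
      push_cast
      exact Finset.sum_congr rfl fun pq hpq => (hterm pq hpq).1
    have hex : ∃ pq ∈ T, comp pq u ≠ 0 := by
      by_contra h
      push_neg at h
      exact hu0 (by rw [← hsum u]; exact Finset.sum_eq_zero h)
    obtain ⟨pq0, hpq0T, hpq0⟩ := hex
    have hpos : 0 < ∑ pq ∈ T, t pq :=
      Finset.sum_pos' (fun pq h => (hterm pq h).2.1)
        ⟨pq0, hpq0T, (hterm pq0 hpq0T).2.2 hpq0⟩
    exact ⟨∑ pq ∈ T, t pq, hpos, hsum_eq⟩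
  -- negativity on the odd part
  have hNeg : ∀ u : V, c u = u → u ∈ Wodd → u ≠ 0 →
      ∃ r : ℝ, r < 0 ∧ (-1 : ℂ) ^ (w / 2) * S u u = (r : ℂ) := by
    intro u hcu huW hu0
    set t : ℤ × ℤ → ℝ :=
      fun pq => ((-1 : ℂ) ^ (w / 2) * S (comp pq u) (comp (pq.2, pq.1) u)).re with htdef
    have hterm : ∀ pq ∈ T,
        (-1 : ℂ) ^ (w / 2) * S (comp pq u) (comp (pq.2, pq.1) u) = (t pq : ℂ) ∧
        t pq ≤ 0 ∧ (comp pq u ≠ 0 → t pq < 0) := by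
      intro pq hpq
      by_cases h0 : comp pq u = 0
      · refine ⟨?_, ?_, fun h => absurd h0 h⟩ <;> simp [htdef, h0]
      · obtain ⟨r, hr, heq⟩ := hdiag u hcu pq hpq h0
        have hodd : ¬ Even pq.1 := by
          intro h
          exact h0 ((hWodd_mem u).mp huW pq h)
        have hq_odd : Odd pq.2 := Int.not_even_iff_odd.mp
          (fun he => hodd ((hparT pq hpq).mpr he))
        have heq' : (-1 : ℂ) ^ (w / 2) * S (comp pq u) (comp (pq.2, pq.1) u) = ((-r : ℝ) : ℂ) := by
          rw [heq, Odd.neg_one_zpow hq_odd]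
          push_cast
          ring
        have ht : t pq = -r := by rw [htdef]; simp only [heq', Complex.ofReal_re]
        exact ⟨by rw [heq', ht], by rw [ht]; linarith, fun _ => by rw [ht]; linarith⟩
    have hsum_eq : (-1 : ℂ) ^ (w / 2) * S u u = ((∑ pq ∈ T, t pq : ℝ) : ℂ) := by
      rw [hS_expand u u, Finset.mul_sum]
      push_cast
      exact Finset.sum_congr rfl fun pq hpq => (hterm pq hpq).1
    have hex : ∃ pq ∈ T, comp pq u ≠ 0 := by
      by_contra h
      push_neg at h
      exact hu0 (by rw [← hsum u]; exact Finset.sum_eq_zero h)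
    obtain ⟨pq0, hpq0T, hpq0⟩ := hex
    have hneg : 0 < ∑ pq ∈ T, -t pq :=
      Finset.sum_pos' (fun pq h => by simpa using (hterm pq h).2.1)
        ⟨pq0, hpq0T, by simpa using (hterm pq0 hpq0T).2.2 hpq0⟩
    refine ⟨∑ pq ∈ T, t pq, ?_, hsum_eq⟩
    have hns : ∑ pq ∈ T, -t pq = -∑ pq ∈ T, t pq := by simp
    rw [hns] at hneg
    linarith
  -- realness of the form on the real points
  have hreal : ∀ u ∈ Vℝ, ∀ v ∈ Vℝ, ∃ r : ℝ, (-1 : ℂ) ^ (w / 2) * S u v = (r : ℂ) := by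
    intro u hu v hv
    set z : ℂ := (-1 : ℂ) ^ (w / 2) * S u v with hz
    have hcz : (starRingEnd ℂ) z = z := by
      rw [hz, map_mul, map_zpow₀, map_neg, map_one, ← hS_conj u v,
        (hmemVℝ u).mp hu, (hmemVℝ v).mp hv]
    exact ⟨z.re, (Complex.conj_eq_iff_re.mp hcz).symm ▸ rfl⟩
  -- symmetry
  have hsymm : ∀ u v : V, (-1 : ℂ) ^ (w / 2) * S u v = (-1 : ℂ) ^ (w / 2) * S v u := by
    intro u v
    rw [hS_symm u v, Even.neg_one_zpow hw_even, one_mul]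
  -- P ⊓ N = ⊥
  have hPN_inf : P ⊓ N = ⊥ := by
    rw [eq_bot_iff]
    intro v hv
    rw [Submodule.mem_inf, hPdef, hNdef, Submodule.mem_inf, Submodule.mem_inf] at hv
    obtain ⟨⟨-, hvE⟩, -, hvO⟩ := hv
    have hall : ∀ pq ∈ T, comp pq v = 0 := by
      intro pq _
      by_cases h : Even pq.1
      · exact (hWodd_mem v).mp hvO pq h
      · exact (hWeven_mem v).mp hvE pq h
    have hv0 : v = 0 := by rw [← hsum v]; exact Finset.sum_eq_zero hall
    simp [hv0]
  -- P ⊔ N = Vℝ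
  have hPN_sup : P ⊔ N = Vℝ := by
    refine le_antisymm (sup_le inf_le_left inf_le_left) ?_
    intro v hv
    have hcv : c v = v := (hmemVℝ v).mp hv
    set g : ℤ × ℤ → V := fun pq => if Even pq.1 then comp pq v else 0 with hgdef
    have hgmem : ∀ pq : ℤ × ℤ, g pq ∈ H pq.1 pq.2 := by
      intro pq
      by_cases h : Even pq.1
      · simp only [hgdef, if_pos h]; exact hmem pq v
      · simp only [hgdef, if_neg h]; exact (H pq.1 pq.2).zero_mem
    set vp : V := ∑ pq ∈ T, g pq with hvpdef
    have hcomp_vp : ∀ pq : ℤ × ℤ, comp pq vp = g pq :=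
      hodgeComp_unique H h_internal T hT g hgmem rfl
    have hvp_even : vp ∈ Weven := by
      rw [hWeven_mem]
      intro pq h
      rw [hcomp_vp, hgdef]
      simp [h]
    have hvm_odd : v - vp ∈ Wodd := by
      rw [hWodd_mem]
      intro pq h
      rw [map_sub, hcomp_vp, hgdef]
      simp [h]
    have hcvp : c vp = vp := by
      have h1 : c vp = ∑ pq ∈ T, c (g pq) := by
        rw [hvpdef, ← hcadd_apply, map_sum]
        rfl
      have h2 : ∀ pq : ℤ × ℤ, c (g pq) = if Even pq.1 then comp (pq.2, pq.1) v else 0 := by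
        intro pq
        by_cases h : Even pq.1
        · simp only [hgdef, if_pos h]
          have := hcomp_conj v (pq.2, pq.1)
          simp only [Prod.fst, Prod.snd] at this
          rw [hcv] at this
          exact this.symm
        · simp only [hgdef, if_neg h, hc_zero]
      have h3 : (∑ pq ∈ T, if Even pq.1 then comp (pq.2, pq.1) v else 0)
          = ∑ pq ∈ T, if Even pq.2 then comp pq v else 0 := by
        refine Finset.sum_equiv (Equiv.prodComm ℤ ℤ) ?_ ?_
        · intro pq'
          constructor
          · exact fun h => hTswap pq' h
          · intro h
            have := hTswap _ h
            simpa using this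
        · intro pq' _
          rfl
      have h4 : (∑ pq ∈ T, if Even pq.2 then comp pq v else 0)
          = ∑ pq ∈ T, if Even pq.1 then comp pq v else 0 := by
        refine Finset.sum_congr rfl ?_
        intro pq hpq
        have := hparT pq hpq
        by_cases h : Even pq.1
        · rw [if_pos h, if_pos (this.mp h)]
        · rw [if_neg h, if_neg (fun h2 => h (this.mpr h2))]
      rw [h1, Finset.sum_congr rfl (fun pq _ => h2 pq), h3, h4]
    have hcvm : c (v - vp) = v - vp := by rw [hc_sub, hcv, hcvp]
    have hdecomp : v = vp + (v - vp) := by abel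
    rw [hdecomp]
    exact Submodule.add_mem _
      (Submodule.mem_sup_left (Submodule.mem_inf.mpr ⟨(hmemVℝ vp).mpr hcvp, hvp_even⟩))
      (Submodule.mem_sup_right (Submodule.mem_inf.mpr ⟨(hmemVℝ _).mpr hcvm, hvm_odd⟩))
  -- orthogonality
  have hortho : ∀ u ∈ P, ∀ v ∈ N, (-1 : ℂ) ^ (w / 2) * S u v = 0 := by
    intro u hu v hv
    rw [Submodule.mem_inf] at hu hv
    have huE : u ∈ Weven := hu.2
    have hvO : v ∈ Wodd := hv.2
    have : S u v = 0 := by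
      rw [hS_expand u v]
      refine Finset.sum_eq_zero ?_
      intro pq hpq
      by_cases h : Even pq.1
      · have h2 : Even pq.2 := (hparT pq hpq).mp h
        rw [(hWodd_mem v).mp hvO (pq.2, pq.1) h2, map_zero]
      · rw [(hWeven_mem u).mp huE pq h, map_zero, LinearMap.zero_apply]
    rw [this, mul_zero]
  -- dimensions
  set Teven : Finset (ℤ × ℤ) := T.filter (fun pq => Even pq.1) with hTevendef
  set Todd : Finset (ℤ × ℤ) := T.filter (fun pq => ¬ Even pq.1) with hTodddef
  have hWeven_eq : Weven = ⨆ pq ∈ Teven, H pq.1 pq.2 := by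
    apply le_antisymm
    · intro v hv
      have hv' := (hWeven_mem v).mp hv
      have hv_eq : ∑ pq ∈ Teven, comp pq v = v := by
        rw [hTevendef, Finset.sum_filter_of_ne, hsum v]
        intro pq _ hne
        by_contra h
        exact hne (hv' pq h)
      rw [← hv_eq]
      refine Submodule.sum_mem _ ?_
      intro pq hpq
      exact Submodule.mem_iSup_of_mem pq (Submodule.mem_iSup_of_mem hpq (hmem pq v))
    · refine iSup_le fun pq => iSup_le fun hpq => ?_
      intro x hx
      rw [hWeven_mem]
      intro pq' hodd
      have hne : pq ≠ pq' := fun h => hodd (h ▸ (Finset.mem_filter.mp hpq).2)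
      exact hodgeComp_eq_zero_of_ne H h_internal hne hx
  have hWodd_eq : Wodd = ⨆ pq ∈ Todd, H pq.1 pq.2 := by
    apply le_antisymm
    · intro v hv
      have hv' := (hWodd_mem v).mp hv
      have hv_eq : ∑ pq ∈ Todd, comp pq v = v := by
        rw [hTodddef, Finset.sum_filter_of_ne, hsum v]
        intro pq _ hne h
        exact hne (hv' pq h)
      rw [← hv_eq]
      refine Submodule.sum_mem _ ?_
      intro pq hpq
      exact Submodule.mem_iSup_of_mem pq (Submodule.mem_iSup_of_mem hpq (hmem pq v))
    · refine iSup_le fun pq => iSup_le fun hpq => ?_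
      intro x hx
      rw [hWodd_mem]
      intro pq' heven
      have hne : pq ≠ pq' := fun h => (Finset.mem_filter.mp hpq).2 (h ▸ heven)
      exact hodgeComp_eq_zero_of_ne H h_internal hne hx
  have hdim_even : finrank ℂ ↥Weven = ∑ pq ∈ Teven, finrank ℂ ↥(H pq.1 pq.2) := by
    rw [hWeven_eq]
    exact finrank_biSup_of_independent h_internal.submodule_iSupIndep Teven
  have hdim_odd : finrank ℂ ↥Wodd = ∑ pq ∈ Todd, finrank ℂ ↥(H pq.1 pq.2) := by
    rw [hWodd_eq]
    exact finrank_biSup_of_independent h_internal.submodule_iSupIndep Todd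
  have hPdim : finrank ℝ ↥P = finrank ℂ ↥Weven :=
    finrank_fixed_inf_eq c hc_add hc_smul hc_invol Vℝ hVℝ Weven hWevenc
  have hNdim : finrank ℝ ↥N = finrank ℂ ↥Wodd :=
    finrank_fixed_inf_eq c hc_add hc_smul hc_invol Vℝ hVℝ Wodd hWoddc
  have hfinsum : ∑ᶠ pq : ℤ × ℤ, ((pq.1.negOnePow : ℤ) * (finrank ℂ ↥(H pq.1 pq.2) : ℤ))
      = ∑ pq ∈ T, ((pq.1.negOnePow : ℤ) * (finrank ℂ ↥(H pq.1 pq.2) : ℤ)) := by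
    apply finsum_eq_sum_of_support_subset
    intro pq h
    simp only [Function.mem_support] at h
    by_contra hT'
    rw [hT pq hT'] at h
    simp [finrank_bot] at h
  have hsplit : ∑ pq ∈ T, ((pq.1.negOnePow : ℤ) * (finrank ℂ ↥(H pq.1 pq.2) : ℤ))
      = ∑ pq ∈ Teven, (finrank ℂ ↥(H pq.1 pq.2) : ℤ)
        - ∑ pq ∈ Todd, (finrank ℂ ↥(H pq.1 pq.2) : ℤ) := by
    rw [← Finset.sum_filter_add_sum_filter_not T (fun pq => Even pq.1), ← hTevendef, ← hTodddef]
    have he : ∀ pq ∈ Teven, ((pq.1.negOnePow : ℤ) * (finrank ℂ ↥(H pq.1 pq.2) : ℤ))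
        = (finrank ℂ ↥(H pq.1 pq.2) : ℤ) := by
      intro pq hpq
      rw [Int.negOnePow_even pq.1 (Finset.mem_filter.mp hpq).2]
      simp
    have ho : ∀ pq ∈ Todd, ((pq.1.negOnePow : ℤ) * (finrank ℂ ↥(H pq.1 pq.2) : ℤ))
        = -(finrank ℂ ↥(H pq.1 pq.2) : ℤ) := by
      intro pq hpq
      rw [Int.negOnePow_odd pq.1 (Int.not_even_iff_odd.mp (Finset.mem_filter.mp hpq).2)]
      simp
    rw [Finset.sum_congr rfl he, Finset.sum_congr rfl ho, Finset.sum_neg_distrib]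
    ring
  -- final assembly
  refine ⟨hreal, fun u _ v _ => hsymm u v, P, N, inf_le_left, inf_le_left, hPN_inf, hPN_sup,
    hortho, ?_, ?_, ?_⟩
  · intro u hu hu0
    rw [Submodule.mem_inf] at hu
    exact hPos u ((hmemVℝ u).mp hu.1) hu.2 hu0
  · intro v hv hv0
    rw [Submodule.mem_inf] at hv
    exact hNeg v ((hmemVℝ v).mp hv.1) hv.2 hv0
  · rw [hfinsum, hsplit, hPdim, hNdim, hdim_even, hdim_odd]
    push_cast
    ring
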